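/- For every Schröder tree t with n ≥ 2 leaves, the dimension of the corresponding face of K(n) is bounded by the leaning-edge counts of its extremal vertices: n − 1 − v(t) ≤ right(top(t)) and n − 1 − v(t) ≤ left(bottom(t)), where v(t) is the number of internal vertices of t. -/
import Mathlib


/-- Plane binary trees: a single leaf, or `V₁ ∧ V₂` for plane binary trees `V₁, V₂`. -/
inductive PBT : Type
  | leaf : PBT
  | node : PBT → PBT → PBT

/-- Number of leaves of a plane binary tree. -/
def PBT.leaves : PBT → ℕ
  | .leaf => 1
  | .node a b => a.leaves + b.leaves

/-- `1` if the root is an internal vertex, `0` if it is a leaf. -/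
def PBT.isInternal : PBT → ℕ
  | .leaf => 0
  | .node _ _ => 1

/-- Number of left-leaning internal edges: edges joining an internal vertex to
its left child, that child being internal as well. -/
def PBT.leftE : PBT → ℕ
  | .leaf => 0
  | .node a b => a.leftE + b.leftE + a.isInternal

/-- Number of right-leaning internal edges: edges joining an internal vertex to
its right child, that child being internal as well. -/
def PBT.rightE : PBT → ℕ
  | .leaf => 0
  | .node a b => a.rightE + b.rightE + b.isInternal

/-- One right rotation applied to some subtree: somewhere a subtree
`(a ∧ b) ∧ c` is replaced by `a ∧ (b ∧ c)`. -/
inductive RightRot : PBT → PBT → Prop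
  | rot (a b c : PBT) : RightRot (.node (.node a b) c) (.node a (.node b c))
  | left {a a' : PBT} (b : PBT) : RightRot a a' → RightRot (.node a b) (.node a' b)
  | right (a : PBT) {b b' : PBT} : RightRot b b' → RightRot (.node a b) (.node a b')

/-- The Tamari order: reflexive-transitive closure of right rotation. -/
def Tamari : PBT → PBT → Prop := Relation.ReflTransGen RightRot

mutual
  /-- Schröder trees: plane rooted trees in which every internal vertex has at
  least two children (encoding faces of associahedra). -/
  inductive STree : Type
    | leaf : STree
    | node : SForest → STree
  /-- Lists of at least two Schröder trees (children of an internal vertex). -/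
  inductive SForest : Type
    | two : STree → STree → SForest
    | cons : STree → SForest → SForest
end

mutual
  /-- Number of leaves of a Schröder tree. -/
  def STree.leavesS : STree → ℕ
    | .leaf => 1
    | .node f => f.leavesF
  def SForest.leavesF : SForest → ℕ
    | .two a b => a.leavesS + b.leavesS
    | .cons a f => a.leavesS + f.leavesF
end

mutual
  /-- Number of internal vertices of a Schröder tree. -/
  def STree.vS : STree → ℕ
    | .leaf => 0
    | .node f => 1 + f.vF
  def SForest.vF : SForest → ℕ
    | .two a b => a.vS + b.vS
    | .cons a f => a.vS + f.vF
end

mutual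
  /-- `top t`: the binary tree obtained by recursively replacing each internal
  vertex with children `t₁, …, t_c` by the right comb `t₁ ∧ (t₂ ∧ (… ∧ t_c))`. -/
  def STree.top : STree → PBT
    | .leaf => .leaf
    | .node f => f.topF
  def SForest.topF : SForest → PBT
    | .two a b => .node a.top b.top
    | .cons a f => .node a.top f.topF
end

mutual
  /-- `bottom t`: the binary tree obtained by recursively replacing each internal
  vertex with children `t₁, …, t_c` by the left comb `((…(t₁ ∧ t₂)…) ∧ t_c)`. -/
  def STree.bottom : STree → PBT
    | .leaf => .leaf
    | .node f => f.bottomF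
  def SForest.bottomF : SForest → PBT
    | .two a b => .node a.bottom b.bottom
    | .cons a f => SForest.bottomAux a.bottom f
  def SForest.bottomAux : PBT → SForest → PBT
    | acc, .two a b => .node (.node acc a.bottom) b.bottom
    | acc, .cons a f => SForest.bottomAux (.node acc a.bottom) f
end

lemma topF_isInternal (f : SForest) : f.topF.isInternal = 1 := by
  cases f <;> simp [SForest.topF, PBT.isInternal]

mutual
  theorem top_bound : ∀ t : STree, t.leavesS ≤ t.top.rightE + t.vS + 1
    | .leaf => by simp [STree.leavesS, STree.top, STree.vS, PBT.rightE]
    | .node f => by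
        have h := topF_bound f
        simp only [STree.leavesS, STree.top, STree.vS]
        omega
  theorem topF_bound : ∀ f : SForest, f.leavesF ≤ f.topF.rightE + f.vF + 2
    | .two a b => by
        have ha := top_bound a
        have hb := top_bound b
        simp only [SForest.leavesF, SForest.topF, SForest.vF, PBT.rightE]
        omega
    | .cons a f => by
        have ha := top_bound a
        have hf := topF_bound f
        have hi := topF_isInternal f
        simp only [SForest.leavesF, SForest.topF, SForest.vF, PBT.rightE]
        omega
end

mutual
  theorem bot_bound : ∀ t : STree, t.leavesS ≤ t.bottom.leftE + t.vS + 1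
    | .leaf => by simp [STree.leavesS, STree.bottom, STree.vS, PBT.leftE]
    | .node f => by
        have h := botF_bound f
        simp only [STree.leavesS, STree.bottom, STree.vS]
        omega
  theorem botF_bound : ∀ f : SForest, f.leavesF ≤ f.bottomF.leftE + f.vF + 2
    | .two a b => by
        have ha := bot_bound a
        have hb := bot_bound b
        simp only [SForest.leavesF, SForest.bottomF, SForest.vF, PBT.leftE]
        omega
    | .cons a f => by
        have ha := bot_bound a
        have hf := botAux_bound a.bottom f
        simp only [SForest.leavesF, SForest.bottomF, SForest.vF]
        omega
  theorem botAux_bound : ∀ (acc : PBT) (f : SForest),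
      acc.leftE + acc.isInternal + f.leavesF ≤ (SForest.bottomAux acc f).leftE + f.vF + 1
    | acc, .two a b => by
        have ha := bot_bound a
        have hb := bot_bound b
        simp only [SForest.leavesF, SForest.bottomAux, SForest.vF, PBT.leftE, PBT.isInternal]
        omega
    | acc, .cons a f => by
        have ha := bot_bound a
        have hf := botAux_bound (.node acc a.bottom) f
        simp only [SForest.leavesF, SForest.bottomAux, SForest.vF, PBT.leftE,
          PBT.isInternal] at *
        omega
end

/-- For every Schröder tree `t` with `n ≥ 2` leaves, the dimension
`n − 1 − v(t)` of the corresponding face of `K(n)` (where `v(t)` is the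
number of internal vertices of `t`) is bounded by the leaning-edge counts of
its extremal vertices: `n − 1 − v(t) ≤ right(top t)` and
`n − 1 − v(t) ≤ left(bottom t)`. -/
theorem face_dim_le_leaning (n : ℕ) (hn : 2 ≤ n) (t : STree) (ht : t.leavesS = n) :
    n - 1 - t.vS ≤ t.top.rightE ∧ n - 1 - t.vS ≤ t.bottom.leftE := by
  have h1 := top_bound t
  have h2 := bot_bound t
  omega
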